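/- Let ν > 0, c ∈ ℝ, β = (2π)²ν, and define on ℝ³ × [0,∞): u₁(x,t) = e^{−βt}·2π(sin(2π(x₂+ct²/2)) + cos(2π(x₃+ct²/2))) − ct, with u₂ and u₃ given by cyclic permutation of the indices (1,2,3), and p(x,t) = −e^{−2βt}(2π)²[sin(2π(x₁+ct²/2))cos(2π(x₂+ct²/2)) + sin(2π(x₂+ct²/2))cos(2π(x₃+ct²/2)) + sin(2π(x₃+ct²/2))cos(2π(x₁+ct²/2))] + c(x₁+x₂+x₃). Then for every c ∈ ℝ the pair (u,p) is a C^∞ solution of the Navier–Stokes equations with zero external force, div u = 0, and initial data u⁰ given by u⁰₁(x) = 2π sin(2πx₂)+2π cos(2πx₃) and its cyclic permutations; if c ≠ 0 then each u_i and p are unbounded on ℝ³ × [0,∞), while if c = 0 then u is bounded and periodic in x with period 1 in each coordinate. -/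

import Mathlib

/-!
Write `E(t) = e^{-βt}`, `g(t) = ct²/2` and `𝟙 = (1,1,1)`. Then
`u(x,t) = E(t) U(x + g(t)𝟙) - g'(t)𝟙`, where `U` is the ABC (Arnold–Beltrami–Childress) flow
`U₁ = 2π (sin 2πx₂ + cos 2πx₃)` (and cyclically). `U` is divergence free, `ΔU = -(2π)² U`, and
`(U·∇)U = -∇P` for `P = -(2π)² Σᵢ sin 2πxᵢ cos 2πxᵢ₊₁`.
With `β = (2π)²ν` the factor `E` absorbs the viscous term. Sweeping `U` along the diagonal adds
`E g' (𝟙·∇)U` to `∂ₜu`, which the convection by the uniform drift `-g'𝟙` cancels; the remaining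
acceleration `-g''𝟙` is a gradient, balanced by the pressure term `g''(x₁+x₂+x₃)`. This linear
pressure and the drift `-ct` are unbounded as soon as `c ≠ 0`.
-/

open Real

/-- Partial derivative of `f : ℝ³ → ℝ` in the `j`-th coordinate direction. -/
noncomputable def pd (f : (Fin 3 → ℝ) → ℝ) (j : Fin 3) (x : Fin 3 → ℝ) : ℝ :=
  fderiv ℝ f x (Pi.single j 1)

/-- Spatial Laplacian of `f : ℝ³ → ℝ`. -/
noncomputable def lap (f : (Fin 3 → ℝ) → ℝ) (x : Fin 3 → ℝ) : ℝ :=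
  ∑ j : Fin 3, pd (pd f j) j x

/-- One-sided (within `[0,∞)`) time derivative. -/
noncomputable def td (f : ℝ → ℝ) (t : ℝ) : ℝ :=
  derivWithin f (Set.Ici 0) t

theorem td_eq_of_hasDerivAt {f : ℝ → ℝ} {f' t : ℝ} (h : HasDerivAt f f' t) (ht : 0 ≤ t) :
    td f t = f' :=
  h.hasDerivWithinAt.derivWithin (uniqueDiffOn_Ici 0 t ht)

section PartialDerivative

variable {f g : (Fin 3 → ℝ) → ℝ} {x : Fin 3 → ℝ} {j : Fin 3}

theorem pd_add (hf : DifferentiableAt ℝ f x) (hg : DifferentiableAt ℝ g x) :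
    pd (fun y => f y + g y) j x = pd f j x + pd g j x := by
  simp [pd, fderiv_fun_add hf hg]

theorem pd_mul (hf : DifferentiableAt ℝ f x) (hg : DifferentiableAt ℝ g x) :
    pd (fun y => f y * g y) j x = f x * pd g j x + g x * pd f j x := by
  simp [pd, fderiv_fun_mul hf hg]

theorem pd_const_mul (a : ℝ) (hf : DifferentiableAt ℝ f x) :
    pd (fun y => a * f y) j x = a * pd f j x := by
  simp [pd, fderiv_const_mul hf]

theorem pd_sub_const (b : ℝ) : pd (fun y => f y - b) j x = pd f j x := by
  simp only [pd, fderiv_sub_const]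

theorem pd_comp_add_right (v : Fin 3 → ℝ) : pd (fun y => f (y + v)) j x = pd f j (x + v) := by
  simp only [pd, fderiv_comp_add_right]

theorem pd_apply (k : Fin 3) : pd (fun y => y k) j x = if j = k then 1 else 0 := by
  simp [pd, fderiv_apply, Pi.single_apply, eq_comm]

theorem pd_sin (hf : DifferentiableAt ℝ f x) :
    pd (fun y => sin (f y)) j x = cos (f x) * pd f j x := by
  simp [pd, fderiv_sin hf]

theorem pd_cos (hf : DifferentiableAt ℝ f x) :
    pd (fun y => cos (f y)) j x = -sin (f x) * pd f j x := by
  simp [pd, fderiv_cos hf]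

theorem pd_sub (hf : DifferentiableAt ℝ f x) (hg : DifferentiableAt ℝ g x) :
    pd (fun y => f y - g y) j x = pd f j x - pd g j x := by
  simp [pd, fderiv_fun_sub hf hg]

theorem pd_mul_const (b : ℝ) (hf : DifferentiableAt ℝ f x) :
    pd (fun y => f y * b) j x = pd f j x * b := by
  rw [pd, fderiv_mul_const hf]
  simp [pd, mul_comm]

theorem lap_sub_const (b : ℝ) : lap (fun y => f y - b) x = lap f x := by
  have h : ∀ j, pd (fun y => f y - b) j = pd f j := fun j => funext fun y => pd_sub_const b
  simp only [lap, h]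

theorem lap_comp_add_right (v : Fin 3 → ℝ) : lap (fun y => f (y + v)) x = lap f (x + v) := by
  have h : ∀ j, pd (fun y => f (y + v)) j = fun y => pd f j (y + v) := fun j =>
    funext fun y => pd_comp_add_right v
  simp only [lap, h, pd_comp_add_right]

theorem lap_const_mul (a : ℝ) (hf : ContDiff ℝ 2 f) : lap (fun y => a * f y) x = a * lap f x := by
  have h : ∀ j, pd (fun y => a * f y) j = fun y => a * pd f j y := fun j =>
    funext fun y => pd_const_mul a (hf.differentiable (by norm_num) y)
  have hpd : ∀ j, Differentiable ℝ (pd f j) := fun j =>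
    ((hf.fderiv_right (m := 1) (by norm_num)).differentiable (by norm_num)).clm_apply
      (differentiable_const _)
  simp only [lap, h, pd_const_mul a (hpd _ x), Finset.mul_sum]

theorem hasDerivAt_comp_add_diag {s : ℝ} (hf : DifferentiableAt ℝ f (x + fun _ => s)) :
    HasDerivAt (fun r => f (x + fun _ => r)) (∑ j, pd f j (x + fun _ => s)) s := by
  have hdiag : HasDerivAt (fun r : ℝ => x + fun _ => r) (fun _ => 1) s :=
    (hasDerivAt_pi.2 fun _ => hasDerivAt_id s).const_add x
  refine (hf.hasFDerivAt.comp_hasDerivAt s hdiag).congr_deriv ?_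
  simp only [pd, ← map_sum]
  congr 1
  ext k
  simp [Finset.sum_apply, Pi.single_apply]

end PartialDerivative

noncomputable def abcFlow (i : Fin 3) (y : Fin 3 → ℝ) : ℝ :=
  2 * π * (sin (2 * π * y (i + 1)) + cos (2 * π * y (i + 2)))

theorem pd_abcFlow (i j : Fin 3) (y : Fin 3 → ℝ) :
    pd (abcFlow i) j y = (2 * π) ^ 2 *
      (cos (2 * π * y (i + 1)) * (if j = i + 1 then 1 else 0) -
        sin (2 * π * y (i + 2)) * (if j = i + 2 then 1 else 0)) := by
  unfold abcFlow
  simp (disch := fun_prop) only [pd_const_mul, pd_add, pd_sin, pd_cos, pd_apply]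
  ring

theorem lap_abcFlow (i : Fin 3) (y : Fin 3 → ℝ) :
    lap (abcFlow i) y = -(2 * π) ^ 2 * abcFlow i y := by
  simp only [lap, funext (pd_abcFlow i _)]
  simp (disch := fun_prop) only [pd_const_mul, pd_sub, pd_mul_const, pd_sin, pd_cos, pd_apply]
  fin_cases i <;>
  simp only [Fin.sum_univ_three, abcFlow, Fin.reduceFinMk, Fin.reduceAdd, Fin.reduceEq,
    ↓reduceIte, mul_one, mul_zero] <;> ring

noncomputable def abcPressure (y : Fin 3 → ℝ) : ℝ :=
  -(2 * π) ^ 2 * ∑ i, sin (2 * π * y i) * cos (2 * π * y (i + 1))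

theorem pd_abcPressure (j : Fin 3) (y : Fin 3 → ℝ) :
    pd abcPressure j y = -(2 * π) ^ 3 *
      (cos (2 * π * y j) * cos (2 * π * y (j + 1)) -
        sin (2 * π * y (j + 2)) * sin (2 * π * y j)) := by
  unfold abcPressure
  simp only [Fin.sum_univ_three]
  simp (disch := fun_prop) only [pd_const_mul, pd_add, pd_mul, pd_sin, pd_cos, pd_apply]
  fin_cases j <;>
  simp only [Fin.reduceFinMk, Fin.reduceAdd, Fin.reduceEq,
    ↓reduceIte, mul_one, mul_zero] <;> ring

theorem abcFlow_euler (i : Fin 3) (y : Fin 3 → ℝ) :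
    ∑ k, abcFlow k y * pd (abcFlow i) k y = -pd abcPressure i y := by
  simp only [pd_abcFlow, pd_abcPressure, Fin.sum_univ_three, abcFlow]
  fin_cases i <;>
  simp only [Fin.reduceFinMk, Fin.reduceAdd, Fin.reduceEq,
    ↓reduceIte, mul_one, mul_zero] <;> ring

theorem sum_pd_abcFlow_self_eq_zero (y : Fin 3 → ℝ) : ∑ i, pd (abcFlow i) i y = 0 := by
  simp [pd_abcFlow]

theorem contDiff_abcFlow {n : WithTop ℕ∞} (i : Fin 3) : ContDiff ℝ n (abcFlow i) := by
  unfold abcFlow; fun_prop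

theorem contDiff_abcPressure {n : WithTop ℕ∞} : ContDiff ℝ n abcPressure := by
  unfold abcPressure; fun_prop

theorem abs_abcFlow_le (i : Fin 3) (y : Fin 3 → ℝ) : |abcFlow i y| ≤ 4 * π := by
  have h := abs_add_le (sin (2 * π * y (i + 1))) (cos (2 * π * y (i + 2)))
  rw [abcFlow, abs_mul, abs_of_pos (by positivity : (0 : ℝ) < 2 * π)]
  nlinarith [abs_sin_le_one (2 * π * y (i + 1)), abs_cos_le_one (2 * π * y (i + 2)), pi_pos]

theorem abs_abcPressure_le (y : Fin 3 → ℝ) : |abcPressure y| ≤ 3 * (2 * π) ^ 2 := by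
  have h : ∀ i, |sin (2 * π * y i) * cos (2 * π * y (i + 1))| ≤ 1 := fun i => by
    rw [abs_mul]; exact mul_le_one₀ (abs_sin_le_one _) (abs_nonneg _) (abs_cos_le_one _)
  have hsum := (Finset.abs_sum_le_sum_abs (fun i => sin (2 * π * y i) * cos (2 * π * y (i + 1)))
    Finset.univ).trans (Finset.sum_le_card_nsmul _ _ 1 fun i _ => h i)
  rw [abcPressure, abs_mul, abs_neg, abs_of_pos (by positivity : (0 : ℝ) < (2 * π) ^ 2)]
  simp only [Finset.card_univ, Fintype.card_fin, nsmul_eq_mul, Nat.cast_ofNat, mul_one] at hsum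
  nlinarith [pi_pos]

theorem abcFlow_add_single (i j : Fin 3) (y : Fin 3 → ℝ) :
    abcFlow i (y + Pi.single j 1) = abcFlow i y := by
  have h : ∀ (φ : ℝ → ℝ), Function.Periodic φ (2 * π) →
      ∀ k, φ (2 * π * (y k + (Pi.single j 1 : Fin 3 → ℝ) k)) = φ (2 * π * y k) := fun φ hφ k => by
    rcases eq_or_ne k j with rfl | hk
    · simpa [mul_add] using hφ (2 * π * y k)
    · simp [hk]
  simp only [abcFlow, Pi.add_apply, h sin sin_periodic, h cos cos_periodic]

/-- `g'` and `g''` play the roles of the derivatives of `g` and `g'`; that relation is assumed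
where it is needed. -/
noncomputable def sweptVelocity (β : ℝ) (g g' : ℝ → ℝ) (i : Fin 3) (x : Fin 3 → ℝ) (t : ℝ) : ℝ :=
  exp (-β * t) * abcFlow i (x + fun _ => g t) - g' t

noncomputable def sweptPressure (β : ℝ) (g g'' : ℝ → ℝ) (x : Fin 3 → ℝ) (t : ℝ) : ℝ :=
  exp (-(2 * β) * t) * abcPressure (x + fun _ => g t) + g'' t * (x 0 + x 1 + x 2)

section SweptABCFlow

variable {β : ℝ} {g g' g'' : ℝ → ℝ} {x : Fin 3 → ℝ} {t : ℝ}

theorem pd_sweptVelocity (i j : Fin 3) :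
    pd (fun y => sweptVelocity β g g' i y t) j x =
      exp (-β * t) * pd (abcFlow i) j (x + fun _ => g t) := by
  have hU : Differentiable ℝ (abcFlow i) := (contDiff_abcFlow i).differentiable one_ne_zero
  simp (disch := fun_prop) only [sweptVelocity, pd_sub_const, pd_const_mul, pd_comp_add_right]

theorem lap_sweptVelocity (i : Fin 3) :
    lap (fun y => sweptVelocity β g g' i y t) x =
      exp (-β * t) * lap (abcFlow i) (x + fun _ => g t) := by
  have hU : ContDiff ℝ 2 fun y => abcFlow i (y + fun _ => g t) :=
    (contDiff_abcFlow i).comp (contDiff_id.add contDiff_const)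
  simp only [sweptVelocity, lap_sub_const, lap_const_mul _ hU, lap_comp_add_right]

theorem pd_sweptPressure (i : Fin 3) :
    pd (fun y => sweptPressure β g g'' y t) i x =
      exp (-(2 * β) * t) * pd abcPressure i (x + fun _ => g t) + g'' t := by
  have hP : Differentiable ℝ abcPressure := contDiff_abcPressure.differentiable one_ne_zero
  unfold sweptPressure
  simp (disch := fun_prop) only [pd_add, pd_const_mul, pd_apply, pd_comp_add_right]
  fin_cases i <;> simp

theorem hasDerivAt_sweptVelocity (i : Fin 3) (hg : HasDerivAt g (g' t) t)
    (hg' : HasDerivAt g' (g'' t) t) :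
    HasDerivAt (sweptVelocity β g g' i x)
      (-β * exp (-β * t) * abcFlow i (x + fun _ => g t) +
        exp (-β * t) * ((∑ j, pd (abcFlow i) j (x + fun _ => g t)) * g' t) - g'' t) t := by
  have hexp : HasDerivAt (fun t => exp (-β * t)) (-β * exp (-β * t)) t := by
    simpa [mul_comm] using ((hasDerivAt_id t).const_mul (-β)).exp
  have hU := (hasDerivAt_comp_add_diag (f := abcFlow i) (x := x)
    ((contDiff_abcFlow i).differentiable one_ne_zero _)).comp t hg
  exact (hexp.mul hU).sub hg'

theorem sweptVelocity_navierStokes (ν : ℝ) (hβ : β = (2 * π) ^ 2 * ν)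
    (hg : ∀ t, HasDerivAt g (g' t) t) (hg' : ∀ t, HasDerivAt g' (g'' t) t) (ht : 0 ≤ t)
    (i : Fin 3) :
    td (sweptVelocity β g g' i x) t +
        ∑ j, sweptVelocity β g g' j x t * pd (fun y => sweptVelocity β g g' i y t) j x =
      ν * lap (fun y => sweptVelocity β g g' i y t) x -
        pd (fun y => sweptPressure β g g'' y t) i x := by
  have hE : exp (-(2 * β) * t) = exp (-β * t) ^ 2 := by
    rw [sq, ← exp_add]; ring_nf
  have hconv : ∑ j, sweptVelocity β g g' j x t * pd (fun y => sweptVelocity β g g' i y t) j x =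
      exp (-β * t) ^ 2 * ∑ j, abcFlow j (x + fun _ => g t) * pd (abcFlow i) j (x + fun _ => g t) -
        exp (-β * t) * g' t * ∑ j, pd (abcFlow i) j (x + fun _ => g t) := by
    -- the drift `-g'𝟙` convects `E U` by `-E g' (𝟙·∇)U`, cancelling the sweep term of `∂ₜu`
    simp only [pd_sweptVelocity]
    simp only [sweptVelocity, Fin.sum_univ_three]
    ring
  rw [td_eq_of_hasDerivAt (hasDerivAt_sweptVelocity i (hg t) (hg' t)) ht, hconv, abcFlow_euler,
    lap_sweptVelocity, lap_abcFlow, pd_sweptPressure, hE]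
  linear_combination -(exp (-β * t) * abcFlow i (x + fun _ => g t)) * hβ

theorem sum_pd_sweptVelocity_self_eq_zero (x : Fin 3 → ℝ) (t : ℝ) :
    ∑ i, pd (fun y => sweptVelocity β g g' i y t) i x = 0 := by
  simp only [pd_sweptVelocity, ← Finset.mul_sum, sum_pd_abcFlow_self_eq_zero, mul_zero]

theorem abs_sweptVelocity_add_le (hβ : 0 ≤ β) (ht : 0 ≤ t) (i : Fin 3) :
    |sweptVelocity β g g' i x t + g' t| ≤ 4 * π := by
  have hE : exp (-β * t) ≤ 1 := exp_le_one_iff.2 (by nlinarith)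
  rw [sweptVelocity, sub_add_cancel, abs_mul, abs_of_pos (exp_pos _)]
  nlinarith [abs_abcFlow_le i (x + fun _ => g t), abs_nonneg (abcFlow i (x + fun _ => g t))]

theorem sweptVelocity_add_single (i j : Fin 3) :
    sweptVelocity β g g' i (x + Pi.single j 1) t = sweptVelocity β g g' i x t := by
  rw [sweptVelocity, add_right_comm, abcFlow_add_single, sweptVelocity]

theorem abs_sweptPressure_sub_le (hβ : 0 ≤ β) (ht : 0 ≤ t) :
    |sweptPressure β g g'' x t - g'' t * (x 0 + x 1 + x 2)| ≤ 3 * (2 * π) ^ 2 := by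
  have hE : exp (-(2 * β) * t) ≤ 1 := exp_le_one_iff.2 (by nlinarith)
  rw [sweptPressure, add_sub_cancel_right, abs_mul, abs_of_pos (exp_pos _)]
  nlinarith [abs_abcPressure_le (x + fun _ => g t), abs_nonneg (abcPressure (x + fun _ => g t))]

theorem not_bounded_sweptVelocity (hβ : 0 ≤ β) (hg' : ¬∃ M, ∀ t, 0 ≤ t → |g' t| ≤ M) (i : Fin 3) :
    ¬∃ M, ∀ x t, 0 ≤ t → |sweptVelocity β g g' i x t| ≤ M := by
  rintro ⟨M, hM⟩
  refine hg' ⟨M + 4 * π, fun t ht => ?_⟩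
  have h := abs_sweptVelocity_add_le (g := g) (g' := g') (x := 0) hβ ht i
  have := abs_sub (sweptVelocity β g g' i 0 t + g' t) (sweptVelocity β g g' i 0 t)
  rw [add_sub_cancel_left] at this
  linarith [hM 0 t ht]

theorem not_bounded_sweptPressure (hβ : 0 ≤ β) (ht : 0 ≤ t) (hg'' : g'' t ≠ 0) :
    ¬∃ M, ∀ x t, 0 ≤ t → |sweptPressure β g g'' x t| ≤ M := by
  rintro ⟨M, hM⟩
  obtain ⟨r, hr⟩ : ∃ r, g'' t * (r + r + r) = M + 3 * (2 * π) ^ 2 + 1 :=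
    ⟨(M + 3 * (2 * π) ^ 2 + 1) / (3 * g'' t), by field_simp; ring⟩
  have hlower :=
    (abs_le.1 (abs_sweptPressure_sub_le (g := g) (g'' := g'') (x := fun _ => r) hβ ht)).1
  rw [hr] at hlower
  linarith [(abs_le.1 (hM (fun _ => r) t ht)).2]

theorem contDiff_sweptVelocity {n : WithTop ℕ∞} (hg : ContDiff ℝ n g) (hg' : ContDiff ℝ n g')
    (i : Fin 3) : ContDiff ℝ n (fun q : (Fin 3 → ℝ) × ℝ => sweptVelocity β g g' i q.1 q.2) := by
  have hshift : ContDiff ℝ n fun q : (Fin 3 → ℝ) × ℝ => q.1 + fun _ => g q.2 :=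
    contDiff_fst.add (contDiff_pi.2 fun _ => hg.comp contDiff_snd)
  unfold sweptVelocity
  exact ((contDiff_const.mul contDiff_snd).exp.mul ((contDiff_abcFlow i).comp hshift)).sub
    (hg'.comp contDiff_snd)

theorem contDiff_sweptPressure {n : WithTop ℕ∞} (hg : ContDiff ℝ n g) (hg'' : ContDiff ℝ n g'') :
    ContDiff ℝ n (fun q : (Fin 3 → ℝ) × ℝ => sweptPressure β g g'' q.1 q.2) := by
  have hshift : ContDiff ℝ n fun q : (Fin 3 → ℝ) × ℝ => q.1 + fun _ => g q.2 :=
    contDiff_fst.add (contDiff_pi.2 fun _ => hg.comp contDiff_snd)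
  have hx : ∀ k : Fin 3, ContDiff ℝ n fun q : (Fin 3 → ℝ) × ℝ => q.1 k :=
    fun k => (contDiff_apply ℝ ℝ k).comp contDiff_fst
  unfold sweptPressure
  exact ((contDiff_const.mul contDiff_snd).exp.mul (contDiff_abcPressure.comp hshift)).add
    ((hg''.comp contDiff_snd).mul (((hx 0).add (hx 1)).add (hx 2)))

end SweptABCFlow

theorem not_bounded_mul_left {c : ℝ} (hc : c ≠ 0) : ¬∃ M, ∀ t : ℝ, 0 ≤ t → |c * t| ≤ M := by
  rintro ⟨M, hM⟩
  have h := hM ((|M| + 1) / |c|) (by positivity)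
  rw [abs_mul, abs_of_nonneg (by positivity : 0 ≤ (|M| + 1) / |c|),
    mul_div_cancel₀ _ (abs_ne_zero.2 hc)] at h
  linarith [le_abs_self M]

/-- Lemma 1 specialized to `g(t) = ct²/2`: for every `c` the pair `(u,p)` is a
smooth solution of Navier–Stokes with zero force and the given periodic initial
data; for `c ≠ 0` velocity and pressure are unbounded, for `c = 0` the velocity
is bounded and 1-periodic in space. -/
theorem stmt13 (ν : ℝ) (hν : 0 < ν) (c : ℝ)
    (β : ℝ) (hβ : β = (2 * π) ^ 2 * ν)
    (u : Fin 3 → (Fin 3 → ℝ) → ℝ → ℝ) (p : (Fin 3 → ℝ) → ℝ → ℝ)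
    (hu0 : ∀ x t, u 0 x t =
      Real.exp (-β * t) * (2 * π) *
        (Real.sin (2 * π * (x 1 + c * t ^ 2 / 2)) +
         Real.cos (2 * π * (x 2 + c * t ^ 2 / 2))) - c * t)
    (hu1 : ∀ x t, u 1 x t =
      Real.exp (-β * t) * (2 * π) *
        (Real.sin (2 * π * (x 2 + c * t ^ 2 / 2)) +
         Real.cos (2 * π * (x 0 + c * t ^ 2 / 2))) - c * t)
    (hu2 : ∀ x t, u 2 x t =
      Real.exp (-β * t) * (2 * π) *
        (Real.sin (2 * π * (x 0 + c * t ^ 2 / 2)) +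
         Real.cos (2 * π * (x 1 + c * t ^ 2 / 2))) - c * t)
    (hp : ∀ x t, p x t =
      -(Real.exp (-(2 * β) * t)) * (2 * π) ^ 2 *
        (Real.sin (2 * π * (x 0 + c * t ^ 2 / 2)) *
           Real.cos (2 * π * (x 1 + c * t ^ 2 / 2)) +
         Real.sin (2 * π * (x 1 + c * t ^ 2 / 2)) *
           Real.cos (2 * π * (x 2 + c * t ^ 2 / 2)) +
         Real.sin (2 * π * (x 2 + c * t ^ 2 / 2)) *
           Real.cos (2 * π * (x 0 + c * t ^ 2 / 2))) +
      c * (x 0 + x 1 + x 2)) :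
    -- smoothness on ℝ³ × [0,∞)
    (∀ i : Fin 3, ContDiffOn ℝ (⊤ : ℕ∞)
      (fun q : (Fin 3 → ℝ) × ℝ => u i q.1 q.2) (Set.univ ×ˢ Set.Ici 0)) ∧
    ContDiffOn ℝ (⊤ : ℕ∞)
      (fun q : (Fin 3 → ℝ) × ℝ => p q.1 q.2) (Set.univ ×ˢ Set.Ici 0) ∧
    -- Navier–Stokes with zero external force
    (∀ x : Fin 3 → ℝ, ∀ t : ℝ, 0 ≤ t → ∀ i : Fin 3,
      td (u i x) t + ∑ j : Fin 3, u j x t * pd (fun y => u i y t) j x =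
        ν * lap (fun y => u i y t) x - pd (fun y => p y t) i x) ∧
    -- divergence-free
    (∀ x : Fin 3 → ℝ, ∀ t : ℝ, 0 ≤ t →
      ∑ i : Fin 3, pd (fun y => u i y t) i x = 0) ∧
    -- initial condition
    (∀ x : Fin 3 → ℝ,
      u 0 x 0 = 2 * π * Real.sin (2 * π * x 1) + 2 * π * Real.cos (2 * π * x 2) ∧
      u 1 x 0 = 2 * π * Real.sin (2 * π * x 2) + 2 * π * Real.cos (2 * π * x 0) ∧
      u 2 x 0 = 2 * π * Real.sin (2 * π * x 0) + 2 * π * Real.cos (2 * π * x 1)) ∧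
    -- if c ≠ 0, every velocity component and the pressure are unbounded
    (c ≠ 0 →
      (∀ i : Fin 3, ¬(∃ M : ℝ, ∀ x : Fin 3 → ℝ, ∀ t : ℝ, 0 ≤ t → |u i x t| ≤ M)) ∧
      ¬(∃ M : ℝ, ∀ x : Fin 3 → ℝ, ∀ t : ℝ, 0 ≤ t → |p x t| ≤ M)) ∧
    -- if c = 0, the velocity is bounded and 1-periodic in space
    (c = 0 →
      (∃ M : ℝ, ∀ i : Fin 3, ∀ x : Fin 3 → ℝ, ∀ t : ℝ, 0 ≤ t → |u i x t| ≤ M) ∧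
      (∀ i : Fin 3, ∀ x : Fin 3 → ℝ, ∀ t : ℝ, 0 ≤ t → ∀ j : Fin 3,
        u i (x + Pi.single j 1) t = u i x t)) := by
  have hβ0 : 0 ≤ β := by rw [hβ]; positivity
  obtain rfl : u = sweptVelocity β (fun t => c * t ^ 2 / 2) (fun t => c * t) := by
    ext i x t
    fin_cases i <;>
    simp only [sweptVelocity, abcFlow, hu0, hu1, hu2, Pi.add_apply, Fin.reduceFinMk,
      Fin.reduceAdd] <;> ring
  obtain rfl : p = sweptPressure β (fun t => c * t ^ 2 / 2) (fun _ => c) := by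
    ext x t
    simp only [sweptPressure, abcPressure, hp, Fin.sum_univ_three, Pi.add_apply, Fin.reduceAdd]
    ring
  have hg (t : ℝ) : HasDerivAt (fun t => c * t ^ 2 / 2) (c * t) t :=
    (((hasDerivAt_pow 2 t).const_mul c).div_const 2).congr_deriv (by push_cast; ring)
  have hg' (t : ℝ) : HasDerivAt (fun t => c * t) c t := by simpa using (hasDerivAt_id t).const_mul c
  refine ⟨fun i => (contDiff_sweptVelocity (by fun_prop) (by fun_prop) i).contDiffOn,
    (contDiff_sweptPressure (by fun_prop) contDiff_const).contDiffOn,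
    fun x t ht i => sweptVelocity_navierStokes ν hβ hg hg' ht i,
    fun x t _ => sum_pd_sweptVelocity_self_eq_zero x t,
    fun x => by simp [sweptVelocity, abcFlow, mul_add],
    fun hc => ⟨fun i => not_bounded_sweptVelocity hβ0 (not_bounded_mul_left hc) i,
      not_bounded_sweptPressure hβ0 le_rfl hc⟩,
    ?_⟩
  rintro rfl
  refine ⟨⟨4 * π, fun i x t ht => ?_⟩, fun i x t _ j => sweptVelocity_add_single i j⟩
  have h := abs_sweptVelocity_add_le (g := fun t => 0 * t ^ 2 / 2) (g' := fun t => 0 * t)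
    (x := x) hβ0 ht i
  rwa [zero_mul, add_zero] at h
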